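/- For every sequence I of length n, Eag(I) − Maj(I) ≤ n/2 − 1/2, and there exist sequences (a,a,a_1,a_2,a_3,a,a_4,a,...) achieving Eag(I) − Maj(I) = n/2 − 3 + 4/n for even n; hence Min(Maj, Eag) = −1/2 and, combined with Max(Maj,Eag) = 1 witnessed by E_n, l(Maj, Eag) = [−1/2, 1]. -/

import Mathlib

open scoped BigOperators

noncomputable section

/-- frequency of item `a` in sequence `I` -/
def freq (I : List ℕ) (a : ℕ) : ℝ := (I.count a : ℝ) / (I.length : ℝ)

/-- profit (aggregate frequency) of buffer sequence `S` against input `I` -/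
def profit (I S : List ℕ) : ℝ := (S.map (freq I)).sum

/-- Naive algorithm: buffers every arriving item. -/
def naiP (I : List ℕ) : ℝ := profit I I

/-- Buffers of the eager algorithm: buffer each arriving item until the first
repeated item (two equal consecutive items), then keep it forever. -/
def eagRun : List ℕ → List ℕ
  | [] => []
  | [x] => [x]
  | x :: y :: rest =>
      if x = y then x :: List.replicate (rest.length + 1) x
      else x :: eagRun (y :: rest)

def eagP (I : List ℕ) : ℝ := profit I (eagRun I)

/-- One step of the Majority algorithm on state (buffer, counter). -/
def majStep (s : ℕ × ℕ) (a : ℕ) : ℕ × ℕ :=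
  if s.2 = 0 then (a, 1)
  else if a = s.1 then (s.1, s.2 + 1)
  else (s.1, s.2 - 1)

def majBuffers (I : List ℕ) : List ℕ :=
  ((List.scanl majStep ((0 : ℕ), (0 : ℕ)) I).tail).map Prod.fst

def majP (I : List ℕ) : ℝ := profit I (majBuffers I)

/-- A valid offline buffer schedule: at each step the buffer holds either the
currently arriving item or the previously buffered item (the first buffered
item must be the first arriving item). -/
def ValidSched (I S : List ℕ) : Prop :=
  S.length = I.length ∧
    ∀ i, i < S.length →
      S.getD i 0 = I.getD i 0 ∨ (0 < i ∧ S.getD i 0 = S.getD (i - 1) 0)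

/-- Optimal offline profit. -/
def optP (I : List ℕ) : ℝ := sSup {x | ∃ S, ValidSched I S ∧ x = profit I S}

/-- Worst-permutation value of an algorithm's profit. -/
def worstP (f : List ℕ → ℝ) (I : List ℕ) : ℝ := sInf {x | ∃ J, J.Perm I ∧ x = f J}

/-- E_n = a,a,b,b,...,b with n-2 copies of b. -/
def Eseq (n a b : ℕ) : List ℕ := a :: a :: List.replicate (n - 2) b

/-- W_n = a_1,a_0,a_2,a_0,... with item 0 playing the role of a_0. -/
def Wseq (n : ℕ) : List ℕ :=
  ((List.range (n / 2)).flatMap fun i => [i + 1, 0]) ++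
    (if n % 2 = 1 then [n / 2 + 1] else [])

/-- W'_n = a_1,...,a_⌈n/2⌉,a_0,...,a_0 with ⌊n/2⌋ copies of a_0 = 0. -/
def Wseq' (n : ℕ) : List ℕ :=
  ((List.range ((n + 1) / 2)).map (· + 1)) ++ List.replicate (n / 2) 0

/-- I_n = ⌈n/2⌉ copies of a_0 = 0 followed by ⌊n/2⌋ distinct items. -/
def Iseq (n : ℕ) : List ℕ :=
  List.replicate ((n + 1) / 2) 0 ++ (List.range (n / 2)).map (· + 1)

/-- D(I): the items of `I` listed in nondecreasing order of frequency. -/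
def Dsort (I : List ℕ) : List ℕ :=
  List.insertionSort (fun x y => I.count x ≤ I.count y) I

/-- The interleaving permutation a'_1, a'_n, a'_2, a'_{n-1}, ... of a list. -/
def interleave : List ℕ → List ℕ
  | [] => []
  | x :: xs => x :: interleave xs.reverse
termination_by l => l.length
decreasing_by set_option linter.unnecessarySimpa false in simpa using Nat.lt_succ_self xs.length

/-- max over sequences of length n of f(I) - g(I). -/
def maxDiff (f g : List ℕ → ℝ) (n : ℕ) : ℝ :=
  sSup {d | ∃ I : List ℕ, I.length = n ∧ d = f I - g I}

/-- min over sequences of length n of f(I) - g(I). -/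
def minDiff (f g : List ℕ → ℝ) (n : ℕ) : ℝ :=
  sInf {d | ∃ I : List ℕ, I.length = n ∧ d = f I - g I}

/-- A deterministic online algorithm for the single-buffer frequent items
problem: the buffer after each nonempty prefix is either the arriving item or
the previous buffer content. -/
structure OnlineAlg where
  buf : List ℕ → ℕ
  first : ∀ x, buf [x] = x
  step : ∀ l x, l ≠ [] → buf (l ++ [x]) = x ∨ buf (l ++ [x]) = buf l

/-- Profit of an online algorithm on input `I`. -/
def oprofit (A : OnlineAlg) (I : List ℕ) : ℝ :=
  ∑ t ∈ Finset.range I.length, freq I (A.buf (I.take (t + 1)))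

end


/-!
Let `a` be a most frequent item of `I`, occurring `M` times among `n`. Every item Eager buffers
has frequency at most `M / n`, so `Eag(I) ≤ M`. The Boyer–Moore counter argument shows that
Majority buffers `a` at least `s ≥ 2M - n` times, and every other buffered item has frequency at
least `1 / n`, so `Maj(I) ≥ (s M + n - s) / n`; the resulting quadratic bound in `M` is at most
`(n - 1) / 2` for every `M`. On `a, a, a₁, a₂, a₃, a, a₄, a, …` Eager keeps
`a` forever, while Majority's counter is exhausted after four steps and afterwards buffers only
singletons; on `E_n = a, a, b, …, b` the roles are exchanged. Dividing by `n` gives the limits.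
-/

open List Filter Topology

section Profit

variable {I S T : List ℕ}

lemma profit_append : profit I (S ++ T) = profit I S + profit I T := by
  simp [profit]

lemma profit_nonneg : 0 ≤ profit I S :=
  List.sum_nonneg fun _ hx => by
    obtain ⟨b, -, rfl⟩ := List.mem_map.1 hx
    unfold freq; positivity

lemma profit_le_of_forall_freq_le {c : ℝ} (h : ∀ b ∈ S, freq I b ≤ c) :
    profit I S ≤ S.length * c := by
  simpa [profit, nsmul_eq_mul] using
    List.sum_le_card_nsmul (S.map (freq I)) c (by simpa using h)

lemma profit_eq_of_forall_freq_eq {c : ℝ} (h : ∀ b ∈ S, freq I b = c) :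
    profit I S = S.length * c := by
  rw [profit, List.map_congr_left h]
  simp

lemma length_mul_freq (a : ℕ) : (I.length : ℝ) * freq I a = I.count a := by
  rcases Nat.eq_zero_or_pos I.length with h | h
  · simp [List.length_eq_zero_iff.1 h]
  · exact mul_div_cancel₀ _ (by positivity)

lemma freq_le_one (b : ℕ) : freq I b ≤ 1 :=
  div_le_one_of_le₀ (by exact_mod_cast List.count_le_length) (Nat.cast_nonneg _)

lemma one_div_length_le_freq {b : ℕ} (hb : b ∈ I) : 1 / (I.length : ℝ) ≤ freq I b := by
  unfold freq
  gcongr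
  exact_mod_cast List.count_pos_iff.2 hb

lemma count_mul_freq_add_le_profit (a : ℕ) (hS : ∀ b ∈ S, b ∈ I) :
    S.count a * freq I a + (S.length - S.count a) / I.length ≤ profit I S := by
  induction S with
  | nil => simp [profit]
  | cons b S ih =>
    have ih := ih fun x hx => hS x (mem_cons_of_mem _ hx)
    have hb := one_div_length_le_freq (hS b mem_cons_self)
    simp only [profit, map_cons, sum_cons] at ih ⊢
    rcases eq_or_ne b a with rfl | hba
    · simp only [count_cons_self, length_cons]
      push_cast
      rw [add_sub_add_right_eq_sub]
      linarith
    · simp only [count_cons_of_ne hba, length_cons]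
      push_cast
      rw [add_sub_right_comm, add_div]
      linarith

end Profit

lemma eagRun_length : ∀ I : List ℕ, (eagRun I).length = I.length
  | [] | [_] => rfl
  | x :: y :: rest => by
    rw [eagRun]
    split_ifs
    · simp
    · simp [eagRun_length (y :: rest)]

lemma eagRun_subset : ∀ I : List ℕ, eagRun I ⊆ I
  | [] | [_] => by simp [eagRun]
  | x :: y :: rest => by
    rw [eagRun]
    split_ifs
    · intro b hb
      obtain rfl | hb := mem_cons.1 hb
      · exact mem_cons_self
      · rw [eq_of_mem_replicate hb]; exact mem_cons_self
    · exact cons_subset_cons _ (eagRun_subset _)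

lemma eagRun_cons_cons_self (x : ℕ) (rest : List ℕ) :
    eagRun (x :: x :: rest) = replicate (rest.length + 2) x := by
  simp [eagRun, replicate_succ]

lemma eagP_cons_cons_self (x : ℕ) (rest : List ℕ) :
    eagP (x :: x :: rest) = (x :: x :: rest).count x := by
  rw [eagP, eagRun_cons_cons_self, ← length_mul_freq,
    profit_eq_of_forall_freq_eq fun b hb => congrArg _ (eq_of_mem_replicate hb), length_replicate]
  rfl

def majBuffersFrom (s : ℕ × ℕ) (I : List ℕ) : List ℕ :=
  ((List.scanl majStep s I).tail).map Prod.fst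

lemma majBuffers_eq_majBuffersFrom (I : List ℕ) : majBuffers I = majBuffersFrom (0, 0) I := rfl

@[simp]
lemma majBuffersFrom_nil (s : ℕ × ℕ) : majBuffersFrom s [] = [] := rfl

@[simp]
lemma majBuffersFrom_cons (s : ℕ × ℕ) (x : ℕ) (I : List ℕ) :
    majBuffersFrom s (x :: I) = (majStep s x).1 :: majBuffersFrom (majStep s x) I := by
  cases I <;> simp [majBuffersFrom]

lemma majBuffers_length (I : List ℕ) : (majBuffers I).length = I.length := by
  simp [majBuffers]

lemma majBuffersFrom_subset {L : List ℕ} :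
    ∀ {s : ℕ × ℕ} {I : List ℕ}, (s.2 = 0 ∨ s.1 ∈ L) → I ⊆ L → majBuffersFrom s I ⊆ L
  | _, [], _, _ => by simp
  | s, x :: I, hs, hI => by
    have hx : (majStep s x).1 ∈ L := by
      unfold majStep
      split_ifs with h0
      · exact hI mem_cons_self
      all_goals exact hs.resolve_left h0
    rw [majBuffersFrom_cons]
    exact cons_subset.2
      ⟨hx, majBuffersFrom_subset (Or.inr hx) (List.Subset.trans (subset_cons_self _ _) hI)⟩

lemma majBuffers_subset (I : List ℕ) : majBuffers I ⊆ I :=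
  majBuffersFrom_subset (Or.inl rfl) (Subset.refl I)

def majPotential (a : ℕ) (s : ℕ × ℕ) : ℤ := if s.1 = a then s.2 else -s.2

lemma min_majPotential_majStep (a x : ℕ) (s : ℕ × ℕ) :
    min (majPotential a s) 0 + (if x = a then 1 else -1) ≤
      (if (majStep s x).1 = a then 1 else 0) + min (majPotential a (majStep s x)) 0 := by
  obtain ⟨b, c⟩ := s
  simp only [majPotential, majStep]
  split_ifs <;> simp_all <;> omega

-- `-min (majPotential a s) 0` is the deficit `a` has to make up before it is buffered again:
-- each step either shrinks it by the step's contribution to `2 · count a - length`, or buffers `a`.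
lemma min_majPotential_add_le_count_majBuffersFrom (a : ℕ) :
    ∀ (s : ℕ × ℕ) (I : List ℕ), min (majPotential a s) 0 + 2 * (I.count a : ℤ) - I.length ≤
      (majBuffersFrom s I).count a
  | _, [] => by simp
  | s, x :: I => by
    have hstep := min_majPotential_majStep a x s
    have ih := min_majPotential_add_le_count_majBuffersFrom a (majStep s x) I
    simp only [majBuffersFrom_cons, count_cons, length_cons, beq_iff_eq] at ih ⊢
    split_ifs at hstep ⊢ <;> push_cast <;> omega

lemma two_mul_count_sub_length_le_count_majBuffers (I : List ℕ) (a : ℕ) :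
    2 * (I.count a : ℤ) - I.length ≤ (majBuffers I).count a := by
  have h := min_majPotential_add_le_count_majBuffersFrom a (0, 0) I
  simp only [majPotential, ite_self, Nat.cast_zero, neg_zero, min_self, zero_add] at h
  exact h

lemma exists_forall_count_le (I : List ℕ) : ∃ a, ∀ b, I.count b ≤ I.count a := by
  rcases eq_or_ne I [] with rfl | hI
  · exact ⟨0, by simp⟩
  obtain ⟨a, -, ha⟩ := I.toFinset.exists_max_image I.count ((toFinset_nonempty_iff I).2 hI)
  refine ⟨a, fun b => ?_⟩
  by_cases hb : b ∈ I
  · exact ha b (mem_toFinset.2 hb)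
  · simp [count_eq_zero_of_not_mem hb]

lemma eagP_le_count {I : List ℕ} {a : ℕ} (ha : ∀ b, I.count b ≤ I.count a) :
    eagP I ≤ I.count a := by
  calc eagP I ≤ (eagRun I).length * freq I a :=
        profit_le_of_forall_freq_le fun b _ => div_le_div_of_nonneg_right
          (by exact_mod_cast ha b) (Nat.cast_nonneg _)
    _ = I.count a := by rw [eagRun_length, length_mul_freq]

lemma count_mul_freq_add_le_majP (I : List ℕ) (a : ℕ) :
    (majBuffers I).count a * freq I a + (I.length - (majBuffers I).count a) / I.length ≤
      majP I := by
  simpa only [majP, majBuffers_length] using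
    count_mul_freq_add_le_profit a (majBuffers_subset I)

lemma sub_le_half_sub_half {n M s : ℝ} (hn : 1 ≤ n) (hM : 1 ≤ M) (hs : 2 * M - n ≤ s) :
    M - (s * (M / n) + (n - s) / n) ≤ n / 2 - 1 / 2 := by
  have hn0 : 0 < n := by linarith
  -- `(M - 1) (s - (2M - n)) ≥ 0` reduces the claim to `(2M - n - 1)² + (n - 1) ≥ 0`.
  rw [show M - (s * (M / n) + (n - s) / n) = (n * M - s * (M - 1) - n) / n by
    field_simp; ring, div_le_iff₀ hn0]
  nlinarith [sq_nonneg (2 * M - n - 1), mul_nonneg (sub_nonneg.2 hM) (sub_nonneg.2 hs)]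

theorem eagP_sub_majP_le {I : List ℕ} (hI : 1 ≤ I.length) :
    eagP I - majP I ≤ (I.length : ℝ) / 2 - 1 / 2 := by
  obtain ⟨a, ha⟩ := exists_forall_count_le I
  obtain ⟨x, hx⟩ := exists_mem_of_length_pos hI
  have hM : (1 : ℝ) ≤ I.count a := by exact_mod_cast (count_pos_iff.2 hx).trans_le (ha x)
  have hs : 2 * (I.count a : ℝ) - I.length ≤ (majBuffers I).count a := by
    exact_mod_cast two_mul_count_sub_length_le_count_majBuffers I a
  have hmaj := count_mul_freq_add_le_majP I a
  rw [freq] at hmaj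
  linarith [eagP_le_count ha, sub_le_half_sub_half (by exact_mod_cast hI) hM hs]

lemma majBuffersFrom_flatMap_pair {a : ℕ} :
    ∀ {xs : List ℕ}, a ∉ xs → ∀ b : ℕ,
      majBuffersFrom (b, 0) (xs.flatMap fun x => [x, a]) = xs.flatMap fun x => [x, x]
  | [], _, _ => rfl
  | x :: xs, ha, b => by
    have hxa : a ≠ x := fun h => ha (h ▸ mem_cons_self)
    have ih := majBuffersFrom_flatMap_pair (not_mem_of_not_mem_cons ha) x
    simp [majStep, hxa, ih]

lemma majBuffersFrom_replicate {b : ℕ} :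
    ∀ {s : ℕ × ℕ} (k : ℕ), (s.1 = b ∨ s.2 = 0) → majBuffersFrom s (replicate k b) = replicate k b
  | _, 0, _ => rfl
  | s, k + 1, hs => by
    have hb : (majStep s b).1 = b := by
      unfold majStep; split_ifs <;> simp_all
    rw [replicate_succ, majBuffersFrom_cons, hb, majBuffersFrom_replicate k (Or.inl hb)]

lemma count_flatMap_pair (xs : List ℕ) (a y : ℕ) :
    (xs.flatMap fun x => [x, a]).count y = xs.count y + if y = a then xs.length else 0 := by
  induction xs with
  | nil => simp
  | cons x xs ih =>
    simp only [flatMap_cons, cons_append, nil_append, count_cons, ih, length_cons, beq_iff_eq]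
    split_ifs <;> omega

/-- The sequence `a, a, a₁, a₂, a₃, a, a₄, a, …` of length `2J + 4`, with `a = 0` and `aᵢ = i`. -/
def eagWitness (J : ℕ) : List ℕ := 0 :: 0 :: 1 :: 2 :: (range' 3 J).flatMap fun x => [x, 0]

lemma eagWitness_length (J : ℕ) : (eagWitness J).length = 2 * J + 4 := by
  simp [eagWitness]
  omega

lemma eagWitness_count_zero (J : ℕ) : (eagWitness J).count 0 = J + 2 := by
  simp [eagWitness, count_flatMap_pair]
  omega

lemma eagWitness_count_of_mem {J x : ℕ} (hx : x ∈ range' 3 J) : (eagWitness J).count x = 1 := by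
  have hx3 : 3 ≤ x := (mem_range'_1.1 hx).1
  simp [eagWitness, count_cons, count_flatMap_pair, count_eq_one_of_mem (nodup_range' 1) hx]
  split_ifs <;> omega

lemma majBuffers_eagWitness (J : ℕ) :
    majBuffers (eagWitness J) = replicate 4 0 ++ (range' 3 J).flatMap fun x => [x, x] := by
  rw [majBuffers_eq_majBuffersFrom, eagWitness]
  simp [majStep, majBuffersFrom_flatMap_pair]

lemma eagP_eagWitness (J : ℕ) : eagP (eagWitness J) = J + 2 := by
  rw [eagWitness, eagP_cons_cons_self, ← eagWitness, eagWitness_count_zero]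
  push_cast; ring

lemma majP_eagWitness (J : ℕ) : majP (eagWitness J) = (6 * J + 8) / (2 * J + 4) := by
  have hfreq0 : freq (eagWitness J) 0 = (J + 2) / (2 * J + 4) := by
    rw [freq, eagWitness_count_zero, eagWitness_length]; push_cast; ring
  have hfreq : ∀ b ∈ (range' 3 J).flatMap (fun x => [x, x]),
      freq (eagWitness J) b = 1 / (2 * J + 4) := by
    intro b hb
    obtain ⟨x, hx, hbx⟩ := mem_flatMap.1 hb
    obtain rfl : b = x := by simpa using hbx
    rw [freq, eagWitness_count_of_mem hx, eagWitness_length]; push_cast; ring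
  rw [majP, majBuffers_eagWitness, profit_append,
    profit_eq_of_forall_freq_eq fun b hb => by rw [eq_of_mem_replicate hb, hfreq0],
    profit_eq_of_forall_freq_eq hfreq]
  simp only [length_replicate, length_flatMap, length_cons, length_nil, map_const', sum_replicate,
    length_range', smul_eq_mul]
  field_simp
  push_cast
  ring

theorem exists_eagP_sub_majP_eq {n : ℕ} (hn : Even n) (h2 : 2 ≤ n) :
    ∃ I : List ℕ, I.length = n ∧ eagP I - majP I = (n : ℝ) / 2 - 3 + 4 / n := by
  obtain rfl | ⟨J, rfl⟩ : n = 2 ∨ ∃ J, n = 2 * J + 4 := by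
    obtain ⟨k, rfl⟩ := hn
    rcases Nat.lt_or_ge k 2 with hk | hk
    · left; omega
    · right; exact ⟨k - 2, by omega⟩
  · refine ⟨[0, 0], rfl, ?_⟩
    norm_num [eagP_cons_cons_self, majP, majBuffers_eq_majBuffersFrom, majStep, profit, freq]
  · refine ⟨eagWitness J, eagWitness_length J, ?_⟩
    rw [eagP_eagWitness, majP_eagWitness]
    push_cast
    field_simp
    ring

lemma majBuffers_Eseq (k : ℕ) :
    majBuffers (Eseq (k + 4) 0 1) = replicate 4 0 ++ replicate k 1 := by
  rw [majBuffers_eq_majBuffersFrom, Eseq, show k + 4 - 2 = k + 1 + 1 by omega]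
  simp [replicate_succ, majStep, majBuffersFrom_replicate]

lemma majP_sub_eagP_Eseq {n : ℕ} (hn : 4 ≤ n) :
    majP (Eseq n 0 1) - eagP (Eseq n 0 1) = ((n : ℝ) - 4) ^ 2 / n := by
  obtain ⟨k, rfl⟩ : ∃ k, n = k + 4 := ⟨n - 4, by omega⟩
  have hlen : (Eseq (k + 4) 0 1).length = k + 4 := by simp [Eseq]
  have hcount0 : (Eseq (k + 4) 0 1).count 0 = 2 := by simp [Eseq, count_replicate]
  have hcount1 : (Eseq (k + 4) 0 1).count 1 = k + 2 := by simp [Eseq]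
  have heag : eagP (Eseq (k + 4) 0 1) = 2 := by
    rw [Eseq, eagP_cons_cons_self, ← Eseq, hcount0]; norm_num
  rw [heag, majP, majBuffers_Eseq, profit_append,
    profit_eq_of_forall_freq_eq fun b hb => congrArg _ (eq_of_mem_replicate hb),
    profit_eq_of_forall_freq_eq fun b hb => congrArg _ (eq_of_mem_replicate hb),
    freq, freq, hcount0, hcount1, hlen]
  simp only [length_replicate]
  push_cast
  field_simp
  ring

lemma Filter.liminf_eq_of_tendsto_comp {α β : Type*} {l : Filter α} {l' : Filter β} [l.NeBot]
    {u : α → ℝ} {φ : β → α} {a : ℝ} (hbdd : IsBoundedUnder (· ≤ ·) l u) (hle : ∀ᶠ x in l, a ≤ u x)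
    (hφ : Tendsto φ l' l) [l'.NeBot] (hlim : Tendsto (u ∘ φ) l' (𝓝 a)) : liminf u l = a :=
  le_antisymm
    (liminf_le_of_le (isBoundedUnder_of_eventually_ge hle) fun _ hb =>
      ge_of_tendsto hlim (hφ.eventually hb))
    (le_liminf_of_le hbdd.isCoboundedUnder_ge hle)

section Extremes

variable {f g : List ℕ → ℝ} {n : ℕ} {c : ℝ}

lemma minDiff_le (h : ∀ I : List ℕ, I.length = n → c ≤ f I - g I) {I : List ℕ}
    (hI : I.length = n) : minDiff f g n ≤ f I - g I :=
  csInf_le ⟨c, by rintro _ ⟨J, hJ, rfl⟩; exact h J hJ⟩ ⟨I, hI, rfl⟩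

lemma le_minDiff (h : ∀ I : List ℕ, I.length = n → c ≤ f I - g I) : c ≤ minDiff f g n :=
  le_csInf ⟨_, replicate n 0, length_replicate, rfl⟩ (by rintro _ ⟨J, hJ, rfl⟩; exact h J hJ)

lemma le_maxDiff (h : ∀ I : List ℕ, I.length = n → f I - g I ≤ c) {I : List ℕ}
    (hI : I.length = n) : f I - g I ≤ maxDiff f g n :=
  le_csSup ⟨c, by rintro _ ⟨J, hJ, rfl⟩; exact h J hJ⟩ ⟨I, hI, rfl⟩

lemma maxDiff_le (h : ∀ I : List ℕ, I.length = n → f I - g I ≤ c) : maxDiff f g n ≤ c :=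
  csSup_le ⟨_, replicate n 0, length_replicate, rfl⟩ (by rintro _ ⟨J, hJ, rfl⟩; exact h J hJ)

end Extremes

lemma majP_sub_eagP_le_length (I : List ℕ) : majP I - eagP I ≤ I.length := by
  have hmaj : majP I ≤ I.length := by
    simpa [majP, majBuffers_length] using
      profit_le_of_forall_freq_le (S := majBuffers I) fun b _ => freq_le_one b
  linarith [show 0 ≤ eagP I from profit_nonneg]

lemma half_sub_half_le_majP_sub_eagP {I : List ℕ} (hI : 1 ≤ I.length) :
    1 / 2 - (I.length : ℝ) / 2 ≤ majP I - eagP I := by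
  linarith [eagP_sub_majP_le hI]

lemma neg_half_le_minDiff_div (n : ℕ) : -(1 / 2) ≤ minDiff majP eagP n / n := by
  rcases Nat.eq_zero_or_pos n with rfl | hn
  · norm_num
  rw [le_div_iff₀ (by exact_mod_cast hn)]
  have := le_minDiff (f := majP) (g := eagP) fun I (hI : I.length = n) =>
    hI ▸ half_sub_half_le_majP_sub_eagP (hI ▸ hn)
  linarith

lemma minDiff_div_le_one {n : ℕ} (hn : 1 ≤ n) : minDiff majP eagP n / n ≤ 1 := by
  refine div_le_one_of_le₀ ?_ (Nat.cast_nonneg n)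
  calc minDiff majP eagP n
      ≤ majP (replicate n 0) - eagP (replicate n 0) :=
        minDiff_le (fun I (hI : I.length = n) => hI ▸ half_sub_half_le_majP_sub_eagP (hI ▸ hn))
          length_replicate
    _ ≤ n := by simpa using majP_sub_eagP_le_length (replicate n 0)

lemma minDiff_div_le_of_even {n : ℕ} (hn : Even n) (h2 : 2 ≤ n) :
    minDiff majP eagP n / n ≤ -(1 / 2) + 3 / n := by
  obtain ⟨I, hI, hdiff⟩ := exists_eagP_sub_majP_eq hn h2
  have hn0 : (0 : ℝ) < n := by exact_mod_cast (by omega : 0 < n)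
  have hmin : minDiff majP eagP n ≤ majP I - eagP I :=
    minDiff_le (fun J (hJ : J.length = n) => hJ ▸ half_sub_half_le_majP_sub_eagP (by omega)) hI
  rw [div_le_iff₀ hn0, add_mul, div_mul_cancel₀ _ hn0.ne']
  have : 0 ≤ 4 / (n : ℝ) := by positivity
  linarith

lemma sq_one_sub_four_div_le_maxDiff_div {n : ℕ} (hn : 4 ≤ n) :
    (1 - 4 / (n : ℝ)) ^ 2 ≤ maxDiff majP eagP n / n := by
  have hn0 : (0 : ℝ) < n := by exact_mod_cast (by omega : 0 < n)
  have hmax := le_maxDiff (fun I (hI : I.length = n) => hI ▸ majP_sub_eagP_le_length I)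
    (show (Eseq n 0 1).length = n by simp [Eseq]; omega)
  rw [majP_sub_eagP_Eseq hn] at hmax
  calc (1 - 4 / (n : ℝ)) ^ 2 = ((n : ℝ) - 4) ^ 2 / n / n := by field_simp
    _ ≤ maxDiff majP eagP n / n := by gcongr

lemma maxDiff_div_le_one (n : ℕ) : maxDiff majP eagP n / n ≤ 1 :=
  div_le_one_of_le₀ (maxDiff_le fun I (hI : I.length = n) => hI ▸ majP_sub_eagP_le_length I)
    (Nat.cast_nonneg n)

lemma liminf_minDiff_div : liminf (fun n => minDiff majP eagP n / (n : ℝ)) atTop = -(1 / 2) := by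
  have hφ : Tendsto (fun m : ℕ => 2 * m + 2) atTop atTop :=
    tendsto_atTop_mono (fun m => show m ≤ 2 * m + 2 by omega) tendsto_id
  have hupper : Tendsto (fun n : ℕ => -(1 / 2) + 3 / (n : ℝ)) atTop (𝓝 (-(1 / 2))) := by
    simpa using
      (tendsto_const_nhds (x := -(1 / 2 : ℝ))).add (tendsto_const_div_atTop_nhds_zero_nat 3)
  refine liminf_eq_of_tendsto_comp
    (isBoundedUnder_of_eventually_le (eventually_atTop.2 ⟨1, fun n => minDiff_div_le_one⟩))
    (Eventually.of_forall neg_half_le_minDiff_div) hφ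
    (tendsto_of_tendsto_of_tendsto_of_le_of_le tendsto_const_nhds (hupper.comp hφ)
      (fun m => neg_half_le_minDiff_div _) fun m => ?_)
  exact minDiff_div_le_of_even (n := 2 * m + 2) ⟨m + 1, by ring⟩ (by omega)

lemma limsup_maxDiff_div : limsup (fun n => maxDiff majP eagP n / (n : ℝ)) atTop = 1 := by
  have hlower : Tendsto (fun n : ℕ => (1 - 4 / (n : ℝ)) ^ 2) atTop (𝓝 1) := by
    simpa using
      ((tendsto_const_nhds (x := (1 : ℝ))).sub (tendsto_const_div_atTop_nhds_zero_nat 4)).pow 2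
  exact Tendsto.limsup_eq (tendsto_of_tendsto_of_tendsto_of_le_of_le' hlower tendsto_const_nhds
    (eventually_atTop.2 ⟨4, fun n => sq_one_sub_four_div_le_maxDiff_div⟩)
    (Eventually.of_forall maxDiff_div_le_one))

/-- Eag(I) − Maj(I) ≤ n/2 − 1/2 for all I; for even n there are
sequences with Eag(I) − Maj(I) = n/2 − 3 + 4/n; hence Min(Maj,Eag) = −1/2 and,
with Max(Maj,Eag) = 1 (witnessed by E_n), l(Maj, Eag) = [−1/2, 1]. -/
theorem stmt16 :
    (∀ I : List ℕ, 1 ≤ I.length → eagP I - majP I ≤ (I.length : ℝ) / 2 - 1 / 2) ∧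
    (∀ n : ℕ, Even n → 2 ≤ n →
      ∃ I : List ℕ, I.length = n ∧ eagP I - majP I = (n : ℝ) / 2 - 3 + 4 / n) ∧
    Filter.liminf (fun n => minDiff majP eagP n / (n : ℝ)) Filter.atTop = -(1 / 2) ∧
    Filter.limsup (fun n => maxDiff majP eagP n / (n : ℝ)) Filter.atTop = 1 :=
  ⟨fun _ => eagP_sub_majP_le, fun _ => exists_eagP_sub_majP_eq, liminf_minDiff_div,
    limsup_maxDiff_div⟩
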